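/- Suppose h : ZMod n → {1, -1}, n = 4m, consists (cyclically) of one block of size m + 2, followed by an alternating sequence of m blocks of size 1, interleaved appropriately with m − 1 blocks of size 2, in the configuration where the (m+2)-block immediately precedes the 1-alternating sequence. Then ∑_j h(j) h(j − 4) = 4m − 12; in particular h is not the defining row of a circulant Hadamard matrix unless m = 3, which is excluded since m must be an odd perfect square. -/
import Mathlib


open Finset
open scoped Classical

/-- `h` is a `±1` vector. -/
def signRow (n : ℕ) (h : ZMod n → ℤ) : Prop := ∀ j, h j = 1 ∨ h j = -1

/-- All nontrivial circular autocorrelations of `h` vanish: `h` is the defining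
row of a circulant Hadamard matrix. -/
def hadamardRow (n : ℕ) [NeZero n] (h : ZMod n → ℤ) : Prop :=
  ∀ s : ZMod n, s ≠ 0 → ∑ j : ZMod n, h j * h (j - s) = 0

/-- `j` is the first index of a maximal (cyclic) constant block of `h`. -/
def isStart (n : ℕ) (h : ZMod n → ℤ) (j : ZMod n) : Prop := h j ≠ h (j - 1)

/-- The length of the maximal constant run of `h` beginning at `j`. -/
noncomputable def blockLen (n : ℕ) (h : ZMod n → ℤ) (j : ZMod n) : ℕ :=
  sInf {k : ℕ | 0 < k ∧ h (j + (k : ZMod n)) ≠ h j}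

/-- `j` is (the position of) a block of size exactly 1. -/
def oneBlock (n : ℕ) (h : ZMod n → ℤ) (j : ZMod n) : Prop :=
  h j ≠ h (j - 1) ∧ h j ≠ h (j + 1)

/-- `j` starts a block of size exactly 2. -/
def twoBlock (n : ℕ) (h : ZMod n → ℤ) (j : ZMod n) : Prop :=
  h j ≠ h (j - 1) ∧ h j = h (j + 1) ∧ h (j + 1) ≠ h (j + 2)

/-- `j` starts a block of size at least 3. -/
def bigBlock (n : ℕ) (h : ZMod n → ℤ) (j : ZMod n) : Prop :=
  h j ≠ h (j - 1) ∧ h j = h (j + 1) ∧ h (j + 1) = h (j + 2)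

/-- The block ending at `j - 1` has size exactly 2. -/
def prevTwo (n : ℕ) (h : ZMod n → ℤ) (j : ZMod n) : Prop :=
  h (j - 1) = h (j - 2) ∧ h (j - 2) ≠ h (j - 3)

/-- The block ending at `j - 1` has size at least 3. -/
def prevBig (n : ℕ) (h : ZMod n → ℤ) (j : ZMod n) : Prop :=
  h (j - 1) = h (j - 2) ∧ h (j - 2) = h (j - 3)

/-- `j` is the first 1-block of a maximal run of consecutive 1-blocks
(a `1`-alternating sequence). -/
def oneRunStart (n : ℕ) (h : ZMod n → ℤ) (j : ZMod n) : Prop :=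
  oneBlock n h j ∧ ¬ oneBlock n h (j - 1)

/-- `j` starts the first 2-block of a maximal run of consecutive 2-blocks
(a `2`-alternating sequence). -/
def twoRunStart (n : ℕ) (h : ZMod n → ℤ) (j : ZMod n) : Prop :=
  twoBlock n h j ∧ ¬ twoBlock n h (j - 2)

/-- `j` starts the first block of a maximal run of consecutive blocks of size `≥ 3`. -/
def bigRunStart (n : ℕ) (h : ZMod n → ℤ) (j : ZMod n) : Prop :=
  bigBlock n h j ∧ ¬ prevBig n h j

/-- The number `α₁` of maximal runs of consecutive 1-blocks. -/
noncomputable def alpha1 (n : ℕ) [NeZero n] (h : ZMod n → ℤ) : ℕ :=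
  (Finset.univ.filter fun j => oneRunStart n h j).card

/-- The length (number of 1-blocks) of the maximal run of 1-blocks starting at `j`. -/
noncomputable def oneRunLen (n : ℕ) (h : ZMod n → ℤ) (j : ZMod n) : ℕ :=
  sInf {l : ℕ | 0 < l ∧ ¬ oneBlock n h (j + (l : ZMod n))}

/-- The length (number of 2-blocks) of the maximal run of 2-blocks starting at `j`. -/
noncomputable def twoRunLen (n : ℕ) (h : ZMod n → ℤ) (j : ZMod n) : ℕ :=
  sInf {l : ℕ | 0 < l ∧ ¬ twoBlock n h (j + ((2 * l : ℕ) : ZMod n))}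


/-- The explicit ±1 pattern as a function of the index value. -/
def ffrow (m v : ℕ) : ℤ :=
  if v < m + 2 then 1
  else if v < 2 * m + 2 then (-1) ^ (v - (m + 1))
  else (-1) ^ (m + 1 + (v - (2 * m + 2)) / 2)

lemma pow_neg_one_even (a b : ℕ) (hab : Even (a + b)) : (-1 : ℤ) ^ a * (-1) ^ b = 1 := by
  rw [← pow_add]; exact Even.neg_one_pow hab

lemma pow_neg_one_odd (a b : ℕ) (hab : Odd (a + b)) : (-1 : ℤ) ^ a * (-1) ^ b = -1 := by
  rw [← pow_add]; exact Odd.neg_one_pow hab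

/-- the bulk+boundary computation for `m ≥ 4`. -/
lemma main_sum (m : ℕ) (hm : 4 ≤ m) :
    ∑ v ∈ Finset.range (4 * m), ffrow m v * ffrow m ((v + 4) % (4 * m))
      = 4 * (m : ℤ) - 12 := by
  have h1 : ∑ v ∈ Finset.Ico 0 (m - 2), ffrow m v * ffrow m ((v + 4) % (4 * m))
      = ((m : ℤ) - 2) := by
    have hc : ∀ v ∈ Finset.Ico 0 (m - 2),
        ffrow m v * ffrow m ((v + 4) % (4 * m)) = (1 : ℤ) := by
      intro v hv
      simp only [Finset.mem_Ico] at hv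
      rw [Nat.mod_eq_of_lt (by omega), ffrow, ffrow, if_pos (by omega), if_pos (by omega)]
      norm_num
    rw [Finset.sum_congr rfl hc, Finset.sum_const, Nat.card_Ico, nsmul_eq_mul, mul_one]
    omega
  have h2 : ∑ v ∈ Finset.Ico (m - 2) (m + 2), ffrow m v * ffrow m ((v + 4) % (4 * m))
      = 0 := by
    rw [Finset.sum_Ico_eq_sum_range]
    have h4 : m + 2 - (m - 2) = 4 := by omega
    rw [h4]
    have key : ∀ i, i < 4 → ∀ z : ℤ, (-1 : ℤ) ^ (i + 1) = z →
        ffrow m (m - 2 + i) * ffrow m ((m - 2 + i + 4) % (4 * m)) = z := by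
      intro i hi z hz
      have hmod : (m - 2 + i + 4) % (4 * m) = m + 2 + i := by
        rw [Nat.mod_eq_of_lt (by omega)]; omega
      rw [hmod, ffrow, ffrow, if_pos (by omega), if_neg (by omega), if_pos (by omega)]
      have e : m + 2 + i - (m + 1) = i + 1 := by omega
      rw [e, one_mul, hz]
    rw [Finset.sum_range_succ, Finset.sum_range_succ, Finset.sum_range_succ,
      Finset.sum_range_one,
      key 0 (by norm_num) (-1) (by norm_num),
      key 1 (by norm_num) 1 (by norm_num),
      key 2 (by norm_num) (-1) (by norm_num),
      key 3 (by norm_num) 1 (by norm_num)]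
    ring
  have h3 : ∑ v ∈ Finset.Ico (m + 2) (2 * m - 2), ffrow m v * ffrow m ((v + 4) % (4 * m))
      = ((m : ℤ) - 4) := by
    have hc : ∀ v ∈ Finset.Ico (m + 2) (2 * m - 2),
        ffrow m v * ffrow m ((v + 4) % (4 * m)) = (1 : ℤ) := by
      intro v hv
      simp only [Finset.mem_Ico] at hv
      rw [Nat.mod_eq_of_lt (by omega), ffrow, ffrow, if_neg (by omega), if_pos (by omega),
        if_neg (by omega), if_pos (by omega)]
      exact pow_neg_one_even _ _ ⟨v - m + 1, by omega⟩
    rw [Finset.sum_congr rfl hc, Finset.sum_const, Nat.card_Ico, nsmul_eq_mul, mul_one]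
    omega
  have h4 : ∑ v ∈ Finset.Ico (2 * m - 2) (2 * m + 2), ffrow m v * ffrow m ((v + 4) % (4 * m))
      = 0 := by
    rw [Finset.sum_Ico_eq_sum_range]
    have h4' : 2 * m + 2 - (2 * m - 2) = 4 := by omega
    rw [h4']
    have key : ∀ i, i < 4 → ∀ z : ℤ,
        ((-1 : ℤ) ^ (m + i - 3) * (-1) ^ (m + 1 + i / 2) = z) →
        ffrow m (2 * m - 2 + i) * ffrow m ((2 * m - 2 + i + 4) % (4 * m)) = z := by
      intro i hi z hz
      have hmod : (2 * m - 2 + i + 4) % (4 * m) = 2 * m + 2 + i := by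
        rw [Nat.mod_eq_of_lt (by omega)]; omega
      rw [hmod, ffrow, ffrow, if_neg (by omega), if_pos (by omega), if_neg (by omega),
        if_neg (by omega)]
      have e1 : 2 * m - 2 + i - (m + 1) = m + i - 3 := by omega
      have e2 : (2 * m + 2 + i - (2 * m + 2)) / 2 = i / 2 := by omega
      rw [e1, e2, hz]
    rw [Finset.sum_range_succ, Finset.sum_range_succ, Finset.sum_range_succ,
      Finset.sum_range_one,
      key 0 (by norm_num) 1 (pow_neg_one_even _ _ ⟨m - 1, by omega⟩),
      key 1 (by norm_num) (-1) (pow_neg_one_odd _ _ ⟨m - 1, by omega⟩),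
      key 2 (by norm_num) (-1) (pow_neg_one_odd _ _ ⟨m, by omega⟩),
      key 3 (by norm_num) 1 (pow_neg_one_even _ _ ⟨m + 1, by omega⟩)]
    ring
  have h5 : ∑ v ∈ Finset.Ico (2 * m + 2) (4 * m - 4), ffrow m v * ffrow m ((v + 4) % (4 * m))
      = (2 * (m : ℤ) - 6) := by
    have hc : ∀ v ∈ Finset.Ico (2 * m + 2) (4 * m - 4),
        ffrow m v * ffrow m ((v + 4) % (4 * m)) = (1 : ℤ) := by
      intro v hv
      simp only [Finset.mem_Ico] at hv
      rw [Nat.mod_eq_of_lt (by omega), ffrow, ffrow, if_neg (by omega), if_neg (by omega),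
        if_neg (by omega), if_neg (by omega)]
      exact pow_neg_one_even _ _ ⟨m + 2 + (v - (2 * m + 2)) / 2, by omega⟩
    rw [Finset.sum_congr rfl hc, Finset.sum_const, Nat.card_Ico, nsmul_eq_mul, mul_one]
    omega
  have h6 : ∑ v ∈ Finset.Ico (4 * m - 4) (4 * m), ffrow m v * ffrow m ((v + 4) % (4 * m))
      = 0 := by
    rw [Finset.sum_Ico_eq_sum_range]
    have h4' : 4 * m - (4 * m - 4) = 4 := by omega
    rw [h4']
    have key : ∀ i, i < 4 → ∀ z : ℤ, ((-1 : ℤ) ^ (2 * m - 2 + i / 2) = z) →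
        ffrow m (4 * m - 4 + i) * ffrow m ((4 * m - 4 + i + 4) % (4 * m)) = z := by
      intro i hi z hz
      have hmod : (4 * m - 4 + i + 4) % (4 * m) = i := by
        have e : 4 * m - 4 + i + 4 = i + 1 * (4 * m) := by omega
        rw [e, Nat.add_mul_mod_self_right, Nat.mod_eq_of_lt (by omega)]
      rw [hmod, ffrow, ffrow, if_neg (by omega), if_neg (by omega), if_pos (by omega)]
      have e1 : m + 1 + (4 * m - 4 + i - (2 * m + 2)) / 2 = 2 * m - 2 + i / 2 := by omega
      rw [e1, mul_one, hz]
    rw [Finset.sum_range_succ, Finset.sum_range_succ, Finset.sum_range_succ,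
      Finset.sum_range_one,
      key 0 (by norm_num) 1 (Even.neg_one_pow ⟨m - 1, by omega⟩),
      key 1 (by norm_num) 1 (Even.neg_one_pow ⟨m - 1, by omega⟩),
      key 2 (by norm_num) (-1) (Odd.neg_one_pow ⟨m - 1, by omega⟩),
      key 3 (by norm_num) (-1) (Odd.neg_one_pow ⟨m - 1, by omega⟩)]
    ring
  rw [Finset.range_eq_Ico,
    ← Finset.sum_Ico_consecutive _ (Nat.zero_le (m - 2)) (show m - 2 ≤ 4 * m by omega),
    ← Finset.sum_Ico_consecutive _ (show m - 2 ≤ m + 2 by omega) (show m + 2 ≤ 4 * m by omega),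
    ← Finset.sum_Ico_consecutive _ (show m + 2 ≤ 2 * m - 2 by omega)
      (show 2 * m - 2 ≤ 4 * m by omega),
    ← Finset.sum_Ico_consecutive _ (show 2 * m - 2 ≤ 2 * m + 2 by omega)
      (show 2 * m + 2 ≤ 4 * m by omega),
    ← Finset.sum_Ico_consecutive _ (show 2 * m + 2 ≤ 4 * m - 4 by omega)
      (show 4 * m - 4 ≤ 4 * m by omega),
    h1, h2, h3, h4, h5, h6]
  ring

lemma main_sum3 :
    ∑ v ∈ Finset.range (4 * 3), ffrow 3 v * ffrow 3 ((v + 4) % (4 * 3))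
      = 4 * (3 : ℤ) - 12 := by decide

theorem stmt15 (n m : ℕ) [NeZero n] (h : ZMod n → ℤ)
    (hn : n = 4 * m) (hm : 3 ≤ m)
    (hdef : ∀ j : ZMod n, h j =
      if j.val < m + 2 then 1
      else if j.val < 2 * m + 2 then (-1) ^ (j.val - (m + 1))
      else (-1) ^ (m + 1 + (j.val - (2 * m + 2)) / 2)) :
    (∑ j : ZMod n, h j * h (j - 4)) = 4 * (m : ℤ) - 12 ∧
    (m ≠ 3 → ¬ hadamardRow n h) := by
  have hval : ∀ v : ℕ, v < n → h ((v : ZMod n)) = ffrow m v := by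
    intro v hv
    rw [hdef, ZMod.val_natCast_of_lt hv, ffrow]
  have step1 : ∑ j : ZMod n, h j * h (j - 4)
      = ∑ j : ZMod n, h (j + 4) * h j := by
    refine (Fintype.sum_equiv (Equiv.addRight (4 : ZMod n))
      (fun j => h (j + 4) * h j) (fun j => h j * h (j - 4)) ?_).symm
    intro x
    simp [add_sub_cancel_right]
  have hnpos : 0 < n := Nat.pos_of_ne_zero (NeZero.ne n)
  have step2 : ∑ j : ZMod n, h (j + 4) * h j
      = ∑ v ∈ Finset.range n, ffrow m ((v + 4) % n) * ffrow m v := by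
    refine Finset.sum_nbij' (fun j : ZMod n => j.val) (fun v : ℕ => (v : ZMod n))
      (fun a _ => Finset.mem_range.mpr (ZMod.val_lt a))
      (fun a ha => Finset.mem_univ _)
      (fun a _ => ZMod.natCast_rightInverse a)
      (fun a ha => ZMod.val_natCast_of_lt (Finset.mem_range.mp ha))
      (fun a _ => ?_)
    have e1 : a + 4 = (((a.val + 4) % n : ℕ) : ZMod n) := by
      rw [ZMod.natCast_mod]
      push_cast
      rw [ZMod.natCast_rightInverse a]
    rw [e1, hval _ (Nat.mod_lt _ hnpos)]
    congr 1
    conv_lhs => rw [← ZMod.natCast_rightInverse a]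
    exact hval _ (ZMod.val_lt a)
  have key : ∑ j : ZMod n, h j * h (j - 4) = 4 * (m : ℤ) - 12 := by
    rw [step1, step2]
    have comm : ∑ v ∈ Finset.range n, ffrow m ((v + 4) % n) * ffrow m v
        = ∑ v ∈ Finset.range n, ffrow m v * ffrow m ((v + 4) % n) :=
      Finset.sum_congr rfl (fun v _ => mul_comm _ _)
    rw [comm, hn]
    rcases Nat.lt_or_ge m 4 with h4 | h4
    · have hm3 : m = 3 := by omega
      subst hm3
      exact main_sum3
    · exact main_sum m h4
  refine ⟨key, fun hm3 hHad => ?_⟩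
  have h4ne : (4 : ZMod n) ≠ 0 := by
    intro h0
    have e : ((4 : ℕ) : ZMod n) = 0 := by push_cast; exact h0
    have e2 := congrArg ZMod.val e
    rw [ZMod.val_natCast_of_lt (by omega), ZMod.val_zero] at e2
    omega
  have hz := hHad 4 h4ne
  rw [key] at hz
  have : m = 3 := by omega
  exact hm3 this
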